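/- arXiv:1301.4624 — 2 statements merged into one kernel-verified Lean document; each statement's English description precedes it below -/
import Mathlib

section
/- Fix a non-compact well-ordered space J and a topological space X. A subset A ⊆ X is J-closed if and only if for every I ⊆ J almost closed in J ∪ {∞_J} and every continuous map f : I ∪ {∞_I} → X, the preimage f⁻¹(A) is closed in I ∪ {∞_I}. -/
open Set Topology TopologicalSpace

universe u v w

/-- The order topology on `WithTop α`; for a noncompact well-ordered `α` with the order
topology, `WithTop α` with this topology is the one-point (Alexandroff) compactification
`α ∪ {∞_α}`, in which `⊤ = ∞_α` is the maximum. -/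
noncomputable instance withTopOrderTopology {α : Type*} [Preorder α] :
    TopologicalSpace (WithTop α) := Preorder.topology _

/-- `I` is almost closed in the ordered topological space `S`:
`closure I \ I = {ℓ}` where `ℓ = min {s ∈ S | I < s}`. -/
def AlmostClosedIn {S : Type*} [LinearOrder S] [TopologicalSpace S] (I : Set S) : Prop :=
  ∃ ℓ : S, closure I \ I = {ℓ} ∧ IsLeast {s : S | ∀ i ∈ I, i < s} ℓ

/-- `I ⊆ J` is almost closed in `J ∪ {∞_J}` (modeled as `WithTop J` with the order topology). -/
def AlmostClosed {J : Type*} [LinearOrder J] (I : Set J) : Prop :=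
  AlmostClosedIn ((fun j : J => (j : WithTop J)) '' I)

/-- A subset `C ⊆ X` is `J`-closed: for every almost closed `I ⊆ J` and continuous
`f : I ∪ {∞_I} → X` (where `I ∪ {∞_I} = WithTop ↥I` is the one-point compactification of
`I` with its internal order topology) with `f(I) ⊆ C` one has `f(∞_I) ∈ C`. -/
def JClosedSet (J : Type v) [LinearOrder J] (X : Type u) [TopologicalSpace X] (C : Set X) : Prop :=
  ∀ I : Set J, AlmostClosed I → ∀ f : WithTop ↥I → X, Continuous f →
    (∀ i : ↥I, f (WithTop.some i) ∈ C) → f ⊤ ∈ C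

/-- `U ⊆ X` is `J`-open iff its complement is `J`-closed. -/
def JOpenSet (J : Type v) [LinearOrder J] (X : Type u) [TopologicalSpace X] (U : Set X) : Prop :=
  JClosedSet J X Uᶜ

/-- `X` is a `J`-convergence space. -/
def IsJConvergence (J : Type v) [LinearOrder J] (X : Type u) [TopologicalSpace X] : Prop :=
  ∀ A : Set X, ¬ IsClosed A →
    ∃ I : Set J, AlmostClosed I ∧ ∃ f : WithTop ↥I → X, Continuous f ∧
      (∀ i : ↥I, f (WithTop.some i) ∈ A) ∧ f ⊤ ∉ A

/-- `JX`: the topology of `J`-open sets. -/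
noncomputable def jTop (J : Type v) [LinearOrder J] (X : Type u) [tX : TopologicalSpace X] :
    TopologicalSpace X := generateFrom {U : Set X | JOpenSet J X U}

/-- `K` is a compact Hausdorff witness for the failure of `A` to be closed. -/
def CGWitness (K : Type v) [tK : TopologicalSpace K] (X : Type u) [TopologicalSpace X]
    (A : Set X) : Prop :=
  CompactSpace K ∧ T2Space K ∧ ∃ f : K → X, Continuous f ∧ ¬ IsClosed (f ⁻¹' A)

/-- `X` is compactly generated. -/
def CompactlyGen.{v', u'} (X : Type u') [TopologicalSpace X] : Prop :=
  ∀ A : Set X, ¬ IsClosed A → ∃ (K : Type v') (tK : TopologicalSpace K), @CGWitness K tK X _ A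

/-- `kX`: `U` is open iff `f ⁻¹ U` is open for every continuous map from a compact
Hausdorff space. -/
def kTop.{v', u'} (X : Type u') [tX : TopologicalSpace X] : TopologicalSpace X :=
  generateFrom {U : Set X |
    ∀ (K : Type v') (tK : TopologicalSpace K), @CompactSpace K tK → @T2Space K tK →
      ∀ f : K → X, Continuous[tK, tX] f → IsOpen[tK] (f ⁻¹' U)}

/-- The directed topology on the successor `J' ∪ {∞} = WithTop J'`: generated by singletons
`{j}` and final segments `(j, ∞]` for `j ∈ J'`. -/
def directedTopology (J' : Type*) [Preorder J'] : TopologicalSpace (WithTop J') :=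
  generateFrom {s : Set (WithTop J') |
    (∃ j : J', s = {WithTop.some j}) ∨ ∃ j : J', s = Ioi (WithTop.some j)}

/-- `J'` witnesses transfinite convergence into `A`. -/
def TransfiniteWitness (J' : Type v) [LinearOrder J'] (X : Type u) [TopologicalSpace X]
    (A : Set X) : Prop :=
  WellFoundedLT J' ∧ Nonempty J' ∧ NoMaxOrder J' ∧
    ∃ f : WithTop J' → X, Continuous[directedTopology J', _] f ∧
      (∀ j : J', f (WithTop.some j) ∈ A) ∧ f ⊤ ∉ A

/-- `X` is a transfinite sequential space. -/
def TransfiniteSequential.{v', u'} (X : Type u') [TopologicalSpace X] : Prop :=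
  ∀ A : Set X, ¬ IsClosed A →
    ∃ (J' : Type v') (lo : LinearOrder J'), @TransfiniteWitness J' lo X _ A

/-- `X` is a `J`-unique convergence space. -/
def JUnique (J : Type v) [LinearOrder J] (X : Type u) [TopologicalSpace X] : Prop :=
  ∀ I : Set J, AlmostClosed I → ∀ f g : WithTop ↥I → X, Continuous f → Continuous g →
    (∀ i : ↥I, f (WithTop.some i) = g (WithTop.some i)) → f = g

/-- The set `M(X,Y)` of continuous maps between spaces with explicitly given topologies. -/
def Cts (X : Type u) (Y : Type w) (tX : TopologicalSpace X) (tY : TopologicalSpace Y) :=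
  {f : X → Y // Continuous[tX, tY] f}

/-- The `𝒥`-open topology on `M(X,Y)`, generated by the sets `W(t,U)`. -/
noncomputable def mjTop (J : Type v) [LinearOrder J] {X : Type u} {Y : Type w}
    (tX : TopologicalSpace X) (tY : TopologicalSpace Y) :
    TopologicalSpace (Cts X Y tX tY) :=
  generateFrom {W : Set (Cts X Y tX tY) |
    ∃ I : Set J, AlmostClosed I ∧ ∃ t : WithTop ↥I → X, Continuous[_, tX] t ∧
      ∃ U : Set Y, IsOpen[tY] U ∧ W = {f | ∀ z : WithTop ↥I, f.1 (t z) ∈ U}}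

/-!
If `f⁻¹(A)` is closed in `I ∪ {∞_I}` and contains `I`, it contains `∞_I`, which lies in the
closure of `I`. Conversely, if `B = f⁻¹(A)` is not closed, let `x` be the least point of
`closure B \ B`; everything of `closure B` below `x` lies in `B`. The initial segment `[0, x]`
of `I ∪ {∞_I}` is itself of the form `I' ∪ {∞_{I'}}` for an almost closed `I'`, and the
continuous retraction `z ↦ min ((closure B ∪ {∞_I}) ∩ [z, ∞_I])` of the well-ordered space
carries `I'` into `B` and fixes `x`. Composing with `f` gives a map sending `I'` into `A` and
`∞_{I'}` outside `A`.
-/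

instance WithTop.instOrderTopology {α : Type*} [Preorder α] : OrderTopology (WithTop α) :=
  ⟨rfl⟩

theorem WithTop.isLUB_range_coe {α : Type*} [Preorder α] [NoMaxOrder α] :
    IsLUB (range ((↑) : α → WithTop α)) ⊤ := by
  refine ⟨fun _ _ => le_top, fun u hu => ?_⟩
  induction u using WithTop.recTopCoe with
  | top => exact le_rfl
  | coe a =>
    obtain ⟨b, hab⟩ := exists_gt a
    exact absurd (hu ⟨b, rfl⟩) (WithTop.coe_lt_coe.2 hab).not_ge

section WellOrder

variable {α : Type*} [LinearOrder α] [WellFoundedLT α]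

theorem Set.Nonempty.exists_isLeast_of_wellFoundedLT {s : Set α} (hs : s.Nonempty) :
    ∃ a, IsLeast s a :=
  ⟨_, wellFounded_lt.min_mem s hs, fun _ => wellFounded_lt.min_le⟩

variable [TopologicalSpace α] [OrderTopology α]

theorem IsLowerSet.isOpen_of_wellFoundedLT {s : Set α} (hs : IsLowerSet s) : IsOpen s := by
  rcases sᶜ.eq_empty_or_nonempty with h | h
  · rw [compl_empty_iff.1 h]
    exact isOpen_univ
  · obtain ⟨m, hm, hmin⟩ := h.exists_isLeast_of_wellFoundedLT
    convert isOpen_Iio (a := m)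
    ext z
    exact ⟨fun hz => lt_of_not_ge fun hmz => hm (hs hmz hz),
      fun hz => by_contra fun hzs => (hmin hzs).not_gt hz⟩

theorem IsClosed.exists_isGreatest_of_wellFoundedLT {s : Set α} (hs : IsClosed s)
    (hne : s.Nonempty) (hbdd : BddAbove s) : ∃ a, IsGreatest s a := by
  obtain ⟨a, ha⟩ := hbdd.exists_isLeast_of_wellFoundedLT
  exact ⟨a, hs.closure_subset (IsLUB.mem_closure ha hne), ha.1⟩

theorem mem_closure_inter_Iio_of_notMem {s : Set α} {x : α} (hx : x ∈ closure s)
    (hxs : x ∉ s) : x ∈ closure (s ∩ Iio x) := by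
  have := (isLowerSet_Iic x).isOpen_of_wellFoundedLT.inter_closure ⟨le_rfl, hx⟩
  convert this using 2
  ext y
  exact ⟨fun ⟨hy, hyx⟩ => ⟨hyx.le, hy⟩,
    fun ⟨hyx, hy⟩ => ⟨hy, hyx.lt_of_ne fun h => hxs (h ▸ hy)⟩⟩

theorem exists_continuous_isLeast_inter_Ici {C : Set α} (hC : IsClosed C)
    (hcof : ∀ z, ∃ c ∈ C, z ≤ c) :
    ∃ r : α → α, Continuous r ∧ ∀ z, IsLeast (C ∩ Ici z) (r z) := by
  choose r hr using fun z =>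
    (show (C ∩ Ici z).Nonempty from (hcof z).imp fun _ => id).exists_isLeast_of_wellFoundedLT
  have hmono : Monotone r := fun z z' h => (hr z).2 ⟨(hr z').1.1, h.trans (hr z').1.2⟩
  refine ⟨r, OrderTopology.continuous_iff.2 fun a => ⟨?_, ?_⟩, hr⟩
  · rcases (C ∩ Iic a).eq_empty_or_nonempty with h | h
    · convert isOpen_univ
      refine eq_univ_of_forall fun z => lt_of_not_ge fun hza => ?_
      exact h.subset ⟨(hr z).1.1, hza⟩
    · -- `r z > a` exactly when `z` lies beyond the last point `c` of `C` below `a`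
      obtain ⟨c, hc, hcmax⟩ :=
        (hC.inter isClosed_Iic).exists_isGreatest_of_wellFoundedLT h ⟨a, fun _ hy => hy.2⟩
      convert isOpen_Ioi (a := c)
      ext z
      refine ⟨fun hz => lt_of_not_ge fun hzc => ?_, fun hcz => lt_of_not_ge fun hza => ?_⟩
      · exact (((hr z).2 ⟨hc.1, hzc⟩).trans hc.2).not_gt hz
      · exact ((hr z).1.2.trans (hcmax ⟨(hr z).1.1, hza⟩)).not_gt hcz
  · exact IsLowerSet.isOpen_of_wellFoundedLT fun z z' h hz => (hmono h).trans_lt hz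

end WellOrder

section AlmostClosedIn

variable {S : Type*} [LinearOrder S] [TopologicalSpace S] {I : Set S}

theorem AlmostClosedIn.nonempty (hI : AlmostClosedIn I) : I.Nonempty := by
  obtain ⟨ℓ, hℓ, -⟩ := hI
  have hℓcl : ℓ ∈ closure I \ I := hℓ ▸ rfl
  exact closure_nonempty_iff.1 ⟨ℓ, hℓcl.1⟩

variable [OrderTopology S]

theorem AlmostClosedIn.exists_gt (hI : AlmostClosedIn I) {i : S} (hi : i ∈ I) :
    ∃ j ∈ I, i < j := by
  obtain ⟨ℓ, hℓ, hℓI⟩ := hI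
  have hℓcl : ℓ ∈ closure I \ I := hℓ ▸ rfl
  obtain ⟨j, hij, hj⟩ := mem_closure_iff.1 hℓcl.1 (Ioi i) isOpen_Ioi (hℓI.1 i hi)
  exact ⟨j, hj, hij⟩

theorem AlmostClosedIn.inter_Iio [WellFoundedLT S] (hI : AlmostClosedIn I) {i : S}
    (hi : i ∈ I) (hne : (I ∩ Iio i).Nonempty)
    (hgt : ∀ j ∈ I ∩ Iio i, ∃ k ∈ I ∩ Iio i, j < k) :
    AlmostClosedIn (I ∩ Iio i) := by
  obtain ⟨ℓ, hℓ, hℓI⟩ := hI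
  have hiℓ : i < ℓ := hℓI.1 i hi
  have hcl : ∀ y ∈ closure (I ∩ Iio i), y < i → y ∈ I ∩ Iio i := by
    refine fun y hy hyi => ⟨by_contra fun hyI => (hyi.trans hiℓ).ne ?_, hyi⟩
    exact (show y ∈ ({ℓ} : Set S) from hℓ ▸ ⟨closure_mono inter_subset_left hy, hyI⟩)
  -- `i` is the supremum of `I ∩ Iio i`: a smaller supremum would be a maximum of it
  have hicl : i ∈ closure (I ∩ Iio i) := by
    obtain ⟨σ, hσ⟩ : ∃ σ, IsLUB (I ∩ Iio i) σ :=
      Nonempty.exists_isLeast_of_wellFoundedLT ⟨i, fun _ hj => hj.2.le⟩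
    have hσcl := hσ.mem_closure hne
    rcases (hσ.2 fun _ hj => hj.2.le).lt_or_eq with hσi | rfl
    · obtain ⟨k, hk, hσk⟩ := hgt σ (hcl σ hσcl hσi)
      exact absurd (hσ.1 hk) hσk.not_ge
    · exact hσcl
  refine ⟨i, subset_antisymm ?_ ?_, fun _ hj => hj.2, fun s hs => ?_⟩
  · rintro y ⟨hy, hyT⟩
    have hyi : y ≤ i := closure_minimal (fun _ hj => hj.2.le) isClosed_Iic hy
    exact hyi.eq_or_lt.resolve_right fun hlt => hyT (hcl y hy hlt)
  · exact singleton_subset_iff.2 ⟨hicl, fun h => lt_irrefl i h.2⟩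
  · by_contra! hsi
    obtain ⟨j, hsj, hj⟩ := mem_closure_iff.1 hicl (Ioi s) isOpen_Ioi hsi
    exact (hs j hj).not_gt hsj

end AlmostClosedIn

theorem exists_continuous_withTop_inter_Iio {J : Type*} [LinearOrder J] {I : Set J} (i : ↥I) :
    ∃ e : WithTop ↥(I ∩ Iio (i : J)) → WithTop ↥I,
      Continuous e ∧ e ⊤ = i ∧ ∀ w : ↥(I ∩ Iio (i : J)), e w < i := by
  let e : WithTop ↥(I ∩ Iio (i : J)) → WithTop ↥I := fun z =>
    WithTop.recTopCoe (i : WithTop ↥I) (fun w => (inclusion inter_subset_left w : WithTop ↥I)) z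
  have he_lt : ∀ w : ↥(I ∩ Iio (i : J)), e w < i := fun w => WithTop.coe_lt_coe.2 w.2.2
  have he_mono : StrictMono e := by
    intro z z' hzz'
    induction z' using WithTop.recTopCoe with
    | top =>
      induction z using WithTop.recTopCoe with
      | top => exact absurd hzz' (lt_irrefl _)
      | coe w => exact he_lt w
    | coe w' =>
      obtain ⟨w, rfl, hww'⟩ := WithTop.lt_iff_exists_coe.1 hzz'
      exact WithTop.coe_lt_coe.2 (WithTop.coe_lt_coe.1 hww' : w < w')
  have he_range : range e = Iic (i : WithTop ↥I) := by
    ext y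
    refine ⟨?_, fun hy => ?_⟩
    · rintro ⟨z, rfl⟩
      induction z using WithTop.recTopCoe with
      | top => exact mem_Iic.2 le_rfl
      | coe w => exact mem_Iic.2 (he_lt w).le
    · rcases (mem_Iic.1 hy).lt_or_eq with hyi | rfl
      · obtain ⟨w, rfl, hwi⟩ := WithTop.lt_iff_exists_coe.1 hyi
        exact ⟨(⟨w, w.2, (WithTop.coe_lt_coe.1 hwi : w < i)⟩ : ↥(I ∩ Iio (i : J))), rfl⟩
      · exact ⟨⊤, rfl⟩
  exact ⟨e, (he_mono.isEmbedding_of_ordConnected (he_range ▸ ordConnected_Iic)).continuous,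
    rfl, he_lt⟩

section AlmostClosed

variable {J : Type v} [LinearOrder J] {I : Set J}

theorem AlmostClosed.top_mem_closure_range_coe (hI : AlmostClosed I) :
    (⊤ : WithTop ↥I) ∈ closure (range ((↑) : ↥I → WithTop ↥I)) := by
  have : Nonempty ↥I := (hI.nonempty.of_image).to_subtype
  have : NoMaxOrder ↥I := ⟨fun w => by
    obtain ⟨_, ⟨k, hk, rfl⟩, hwk⟩ := hI.exists_gt (mem_image_of_mem _ w.2)
    exact ⟨⟨k, hk⟩, show (w : J) < k from WithTop.coe_lt_coe.1 hwk⟩⟩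
  exact WithTop.isLUB_range_coe.mem_closure (range_nonempty _)

variable [WellFoundedLT J]

theorem AlmostClosed.inter_Iio (hI : AlmostClosed I) {i : J} (hi : i ∈ I)
    (hne : (I ∩ Iio i).Nonempty) (hgt : ∀ j ∈ I ∩ Iio i, ∃ k ∈ I ∩ Iio i, j < k) :
    AlmostClosed (I ∩ Iio i) := by
  unfold AlmostClosed
  rw [image_inter WithTop.coe_injective, WithTop.image_coe_Iio]
  refine AlmostClosedIn.inter_Iio hI (mem_image_of_mem _ hi) ?_ ?_
  · obtain ⟨j, hj, hji⟩ := hne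
    exact ⟨j, mem_image_of_mem _ hj, WithTop.coe_lt_coe.2 hji⟩
  · rintro _ ⟨⟨j, hj, rfl⟩, hji⟩
    obtain ⟨k, ⟨hk, hki⟩, hjk⟩ := hgt j ⟨hj, WithTop.coe_lt_coe.1 hji⟩
    exact ⟨k, ⟨mem_image_of_mem _ hk, WithTop.coe_lt_coe.2 hki⟩, WithTop.coe_lt_coe.2 hjk⟩

theorem AlmostClosed.exists_continuous_of_mem_closure_Iio (hI : AlmostClosed I) {x : WithTop ↥I}
    (hx : x ∈ closure (Iio x)) :
    ∃ I' : Set J, AlmostClosed I' ∧ ∃ e : WithTop ↥I' → WithTop ↥I,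
      Continuous e ∧ e ⊤ = x ∧ ∀ w : ↥I', e w < x := by
  induction x using WithTop.recTopCoe with
  | top => exact ⟨I, hI, id, continuous_id, rfl, WithTop.coe_lt_top⟩
  | coe i =>
    have hne : (I ∩ Iio (i : J)).Nonempty := by
      obtain ⟨p, hp⟩ := closure_nonempty_iff.1 ⟨_, hx⟩
      obtain ⟨w, rfl, hwi⟩ := WithTop.lt_iff_exists_coe.1 (mem_Iio.1 hp)
      exact ⟨w, w.2, (WithTop.coe_lt_coe.1 hwi : w < i)⟩
    have hgt : ∀ j ∈ I ∩ Iio (i : J), ∃ k ∈ I ∩ Iio (i : J), j < k := by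
      intro j hj
      obtain ⟨p, hjp, hpi⟩ := mem_closure_iff.1 hx (Ioi ((⟨j, hj.1⟩ : ↥I) : WithTop ↥I))
        isOpen_Ioi (WithTop.coe_lt_coe.2 hj.2)
      obtain ⟨w, rfl, hwi⟩ := WithTop.lt_iff_exists_coe.1 (mem_Iio.1 hpi)
      exact ⟨w, ⟨w.2, (WithTop.coe_lt_coe.1 hwi : w < i)⟩,
        (WithTop.coe_lt_coe.1 hjp : ⟨j, hj.1⟩ < w)⟩
    exact ⟨_, hI.inter_Iio i.2 hne hgt, exists_continuous_withTop_inter_Iio i⟩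

end AlmostClosed

theorem JClosedSet.isClosed_preimage {J : Type v} [LinearOrder J] [WellFoundedLT J] {X : Type u}
    [TopologicalSpace X] {A : Set X} (hA : JClosedSet J X A) {I : Set J} (hI : AlmostClosed I)
    {f : WithTop ↥I → X} (hf : Continuous f) : IsClosed (f ⁻¹' A) := by
  set B := f ⁻¹' A
  by_contra hB
  obtain ⟨x, ⟨hxcl, hxB⟩, hxmin⟩ :=
    (nonempty_of_not_subset fun h =>
      hB (isClosed_of_closure_subset h)).exists_isLeast_of_wellFoundedLT
  have hlim : x ∈ closure (B ∩ Iio x) := mem_closure_inter_Iio_of_notMem hxcl hxB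
  obtain ⟨I', hI', e, he, hex, helt⟩ :=
    hI.exists_continuous_of_mem_closure_Iio (closure_mono inter_subset_right hlim)
  obtain ⟨r, hr, hrleast⟩ := exists_continuous_isLeast_inter_Ici
    (isClosed_closure.union (isClosed_singleton (x := (⊤ : WithTop ↥I))))
    fun _ => ⟨⊤, Or.inr rfl, le_top⟩
  have hrx : r x = x := (hrleast x).unique ⟨⟨Or.inl hxcl, mem_Ici.2 le_rfl⟩, fun _ h => h.2⟩
  have hreB : ∀ w : ↥I', r (e w) ∈ B := by
    intro w
    obtain ⟨p, hwp, hpB, hpx⟩ := mem_closure_iff.1 hlim (Ioi (e w)) isOpen_Ioi (helt w)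
    have hrex : r (e w) < x :=
      ((hrleast _).2 ⟨Or.inl (subset_closure hpB), mem_Ici.2 hwp.le⟩).trans_lt hpx
    rcases (hrleast (e w)).1.1 with hcl | htop
    · exact by_contra fun hn => (hxmin ⟨hcl, hn⟩).not_gt hrex
    · exact absurd ((mem_singleton_iff.1 htop) ▸ hrex) not_top_lt
  have := hA I' hI' (f ∘ r ∘ e) (hf.comp (hr.comp he)) hreB
  rw [Function.comp_apply, Function.comp_apply, hex, hrx] at this
  exact hxB this

theorem stmt3_general {J : Type v} [LinearOrder J] [WellFoundedLT J] {X : Type u} [TopologicalSpace X]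
    (A : Set X) :
    JClosedSet J X A ↔
      ∀ I : Set J, AlmostClosed I → ∀ f : WithTop ↥I → X, Continuous f →
        IsClosed (f ⁻¹' A) :=
  ⟨fun hA _ hI _ hf => hA.isClosed_preimage hI hf, fun H I hI f hf hAI =>
    have hrange : range ((↑) : ↥I → WithTop ↥I) ⊆ f ⁻¹' A := range_subset_iff.2 hAI
    (H I hI f hf).closure_subset (closure_mono hrange hI.top_mem_closure_range_coe)⟩

theorem stmt3 {J : Type v} [LinearOrder J] [WellFoundedLT J] [TopologicalSpace J]
    [OrderTopology J] [NoncompactSpace J] {X : Type u} [TopologicalSpace X] (A : Set X) :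
    JClosedSet J X A ↔
      ∀ I : Set J, AlmostClosed I → ∀ f : WithTop ↥I → X, Continuous f →
        IsClosed (f ⁻¹' A) :=
  stmt3_general A
end

section
/- Fix a non-compact well-ordered space J. For any J-convergence spaces X, Y, Z, the exponential correspondence sending a continuous map f : X ×_J Y → Z to its adjoint x ↦ (y ↦ f(x,y)) is a natural homeomorphism J M_J(X ×_J Y, Z) ≅ J M_J(X, J M_J(Y, Z)). Consequently the category of J-convergence spaces with the J-product and function spaces J M_J(X,Y) is Cartesian closed. -/
open Set Topology TopologicalSpace

universe u v w

/-!
Currying is a bijection between the two sets of continuous maps, so the content is continuity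
in both directions. All topologies involved are detected by transfinite sequences
`I ∪ {∞_I} → X` with `I ⊆ J` almost closed, and the compactness needed to handle them is a row
lemma: if `S ⊆ (M ∪ {∞}) × (K ∪ {∞})` is `J`-closed and every row `m ∈ M` meets `S`, then so
does the row `∞`. It is proved by Zorn's lemma applied to monotone transfinite staircases through
`S`, whose height is pushed up as far as `S` allows. Applied to `{(i, z) | f (p i, t z) ∉ U}`, the
row lemma shows that the sets `W(t, U)` pull back to `J`-open sets under currying and
uncurrying; evaluation is continuous along transfinite sequences because every tail of such a
sequence is again one.
-/

instance {γ : Type*} [Preorder γ] : OrderTopology (WithTop γ) := ⟨rfl⟩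

section WellOrderTopology

variable {β : Type*} [LinearOrder β] [TopologicalSpace β] [OrderTopology β]

theorem isOpen_Iic_of_wellFoundedLT [WellFoundedLT β] (c : β) : IsOpen (Iic c) := by
  by_cases h : (Ioi c).Nonempty
  · have hIic : Iic c = Iio (wellFounded_lt.min _ h) := by
      ext y
      refine ⟨fun hy => hy.trans_lt (wellFounded_lt.min_mem _ h), fun hy => not_lt.1 ?_⟩
      exact fun hcy => not_lt.2 (wellFounded_lt.min_le (mem_Ioi.2 hcy)) hy
    exact hIic ▸ isOpen_Iio
  · have hIic : Iic c = univ := eq_univ_of_forall fun y => not_lt.1 fun hcy => h ⟨y, hcy⟩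
    exact hIic ▸ isOpen_univ

theorem isOpen_Ioc_of_wellFoundedLT [WellFoundedLT β] (b c : β) : IsOpen (Ioc b c) := by
  rw [← Ioi_inter_Iic]
  exact isOpen_Ioi.inter (isOpen_Iic_of_wellFoundedLT c)

theorem isOpen_singleton_or_isSuccLimit [WellFoundedLT β] (x : β) :
    IsOpen {x} ∨ Order.IsSuccLimit x := by
  by_cases hx : Order.IsSuccLimit x
  · exact Or.inr hx
  rcases Order.not_isSuccLimit_iff.1 hx with hmin | hpre
  · exact Or.inl (hmin.Iic_eq ▸ isOpen_Iic_of_wellFoundedLT x)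
  · obtain ⟨b, hb⟩ := Order.not_isSuccPrelimit_iff.1 hpre
    exact Or.inl (hb.Ioc_eq ▸ isOpen_Ioc_of_wellFoundedLT b x)

theorem mem_closure_of_exists_between {S : Set β} {y : β} (hne : ∃ z ∈ S, z ≤ y)
    (h : ∀ b < y, ∃ z ∈ S, b < z ∧ z ≤ y) : y ∈ closure S := by
  rw [mem_closure_iff_nhds]
  intro o ho
  by_cases hmin : IsMin y
  · obtain ⟨z, hzS, hz⟩ := hne
    exact ⟨z, by rw [hmin.eq_of_le hz]; exact mem_of_mem_nhds ho, hzS⟩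
  · obtain ⟨b, hb, hsub⟩ := exists_Ioc_subset_of_mem_nhds ho (not_isMin_iff.1 hmin)
    obtain ⟨z, hzS, hbz, hzy⟩ := h b hb
    exact ⟨z, hsub ⟨hbz, hzy⟩, hzS⟩

theorem exists_between_of_mem_closure [WellFoundedLT β] {S : Set β} {y : β}
    (hy : y ∈ closure S) (hyS : y ∉ S) :
    (∃ z ∈ S, z < y) ∧ ∀ b < y, ∃ z ∈ S, b < z ∧ z < y := by
  have hne {z} (hz : z ∈ S) : z ≠ y := fun h => hyS (h ▸ hz)
  constructor
  · obtain ⟨z, hz, hzS⟩ := mem_closure_iff.1 hy _ (isOpen_Iic_of_wellFoundedLT y) self_mem_Iic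
    exact ⟨z, hzS, lt_of_le_of_ne hz (hne hzS)⟩
  · intro b hb
    obtain ⟨z, hz, hzS⟩ :=
      mem_closure_iff.1 hy _ (isOpen_Ioc_of_wellFoundedLT b y) (right_mem_Ioc.2 hb)
    exact ⟨z, hzS, hz.1, lt_of_le_of_ne hz.2 (hne hzS)⟩

theorem Monotone.continuous_of_isSuccLimit [WellFoundedLT β] {γ : Type*} [LinearOrder γ]
    [TopologicalSpace γ] [OrderTopology γ] [WellFoundedLT γ] {f : β → γ} (hf : Monotone f)
    (hlim : ∀ x, Order.IsSuccLimit x → ∀ k < f x, ∃ b < x, ∀ z ∈ Ioc b x, k < f z) :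
    Continuous f := by
  refine continuous_iff_continuousAt.2 fun x => ?_
  rcases isOpen_singleton_or_isSuccLimit x with hiso | hx
  · rw [ContinuousAt, (isOpen_singleton_iff_nhds_eq_pure x).1 hiso]
    exact tendsto_pure_nhds f x
  refine fun s hs => Filter.mem_map.2 ?_
  by_cases hmin : IsMin (f x)
  · have hIic : Iic x ⊆ f ⁻¹' s := fun z hz => by
      rw [mem_preimage, hmin.eq_of_le (hf hz)]
      exact mem_of_mem_nhds hs
    exact Filter.mem_of_superset ((isOpen_Iic_of_wellFoundedLT x).mem_nhds self_mem_Iic) hIic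
  obtain ⟨k, hk, hsub⟩ := exists_Ioc_subset_of_mem_nhds hs (not_isMin_iff.1 hmin)
  obtain ⟨b, hb, hbk⟩ := hlim x hx k hk
  refine Filter.mem_of_superset ((isOpen_Ioc_of_wellFoundedLT b x).mem_nhds (right_mem_Ioc.2 hb)) ?_
  exact fun z hz => hsub ⟨hbk z hz, hf hz.2⟩

end WellOrderTopology

noncomputable def lub {α : Type*} [LinearOrder α] [WellFoundedLT α] (s : Set (WithTop α)) :
    WithTop α :=
  wellFounded_lt.min (upperBounds s) ⟨⊤, fun _ _ => le_top⟩

theorem isLUB_lub {α : Type*} [LinearOrder α] [WellFoundedLT α] (s : Set (WithTop α)) :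
    IsLUB s (lub s) :=
  ⟨wellFounded_lt.min_mem _ _, fun _ hu => wellFounded_lt.min_le hu⟩

section AlmostClosedSubsets

variable {J : Type*} [LinearOrder J]

abbrev coeImage (I : Set J) : Set (WithTop J) := (fun j : J => (j : WithTop J)) '' I

def Approaches (I : Set J) (y : WithTop J) : Prop :=
  (∃ j ∈ I, (j : WithTop J) < y) ∧ ∀ b < y, ∃ j ∈ I, b < (j : WithTop J) ∧ (j : WithTop J) < y

variable {I K L M : Set J} {y : WithTop J}

theorem coe_lt_coe_iff_val {m m' : ↥M} : (m : WithTop ↥M) < m' ↔ (m.1 : WithTop J) < m'.1 := by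
  rw [WithTop.coe_lt_coe, WithTop.coe_lt_coe, Subtype.coe_lt_coe]

theorem coe_le_coe_iff_val {m m' : ↥M} : (m : WithTop ↥M) ≤ m' ↔ (m.1 : WithTop J) ≤ m'.1 := by
  rw [WithTop.coe_le_coe, WithTop.coe_le_coe, Subtype.coe_le_coe]

theorem Approaches.mono (h : Approaches I y) (hIK : ∀ j ∈ I, (j : WithTop J) < y → j ∈ K) :
    Approaches K y := by
  obtain ⟨⟨j, hj, hjy⟩, hb⟩ := h
  refine ⟨⟨j, hIK j hj hjy, hjy⟩, fun b hb' => ?_⟩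
  obtain ⟨j, hj, hbj, hjy⟩ := hb b hb'
  exact ⟨j, hIK j hj hjy, hbj, hjy⟩

theorem not_approaches_singleton (j : J) (y : WithTop J) : ¬Approaches {j} y := by
  rintro ⟨⟨i, hi, hiy⟩, hb⟩
  obtain ⟨k, hk, hik, -⟩ := hb i hiy
  rw [mem_singleton_iff.1 hi, mem_singleton_iff.1 hk] at hik
  exact hik.false

theorem Approaches.mem_closure (h : Approaches I y) : y ∈ closure (coeImage I) := by
  refine mem_closure_of_exists_between ?_ fun b hb => ?_
  · obtain ⟨j, hj, hjy⟩ := h.1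
    exact ⟨j, ⟨j, hj, rfl⟩, hjy.le⟩
  · obtain ⟨j, hj, hbj, hjy⟩ := h.2 b hb
    exact ⟨j, ⟨j, hj, rfl⟩, hbj, hjy.le⟩

theorem coe_mem_closure_of_approaches (h : L ⊆ M) {m : ↥M} (hm : Approaches L (m.1 : WithTop J)) :
    (m : WithTop ↥M) ∈ closure (range fun l : ↥L => (Set.inclusion h l : WithTop ↥M)) := by
  refine mem_closure_of_exists_between ?_ fun b hb => ?_
  · obtain ⟨j, hj, hjm⟩ := hm.1
    exact ⟨_, ⟨⟨j, hj⟩, rfl⟩, coe_le_coe_iff_val.2 hjm.le⟩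
  · obtain ⟨b, rfl⟩ := WithTop.ne_top_iff_exists.1 (hb.trans (WithTop.coe_lt_top m)).ne
    obtain ⟨j, hj, hbj, hjm⟩ := hm.2 b.1 (coe_lt_coe_iff_val.1 hb)
    exact ⟨_, ⟨⟨j, hj⟩, rfl⟩, coe_lt_coe_iff_val.2 hbj, coe_le_coe_iff_val.2 hjm.le⟩

theorem approaches_of_mem_closure [WellFoundedLT J] (hy : y ∈ closure (coeImage I))
    (hyI : y ∉ coeImage I) : Approaches I y := by
  obtain ⟨⟨_, ⟨j, hj, rfl⟩, hjy⟩, hb⟩ := exists_between_of_mem_closure hy hyI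
  refine ⟨⟨j, hj, hjy⟩, fun b hb' => ?_⟩
  obtain ⟨_, ⟨j, hj, rfl⟩, hbj, hjy⟩ := hb b hb'
  exact ⟨j, hj, hbj, hjy⟩

variable [WellFoundedLT J]

noncomputable def limitOf (I : Set J) : WithTop J := lub (coeImage I)

theorem isLUB_limitOf (I : Set J) : IsLUB (coeImage I) (limitOf I) := isLUB_lub _

theorem exists_gt_of_lt_limitOf {b : WithTop J} (hb : b < limitOf I) :
    ∃ j ∈ I, b < (j : WithTop J) := by
  by_contra! h
  exact not_le.2 hb ((isLUB_limitOf I).2 fun _ ⟨j, hj, hjz⟩ => hjz ▸ h j hj)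

theorem coe_lt_limitOf_of_forall_exists_gt (hmax : ∀ j ∈ I, ∃ j' ∈ I, j < j') {j : J} (hj : j ∈ I) :
    (j : WithTop J) < limitOf I := by
  obtain ⟨j', hj', hjj'⟩ := hmax j hj
  exact (WithTop.coe_lt_coe.2 hjj').trans_le ((isLUB_limitOf I).1 ⟨j', hj', rfl⟩)

theorem approaches_limitOf_of_forall_exists_gt (hne : I.Nonempty)
    (hmax : ∀ j ∈ I, ∃ j' ∈ I, j < j') :
    Approaches I (limitOf I) := by
  obtain ⟨j, hj⟩ := hne
  refine ⟨⟨j, hj, coe_lt_limitOf_of_forall_exists_gt hmax hj⟩, fun b hb => ?_⟩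
  obtain ⟨j, hj, hbj⟩ := exists_gt_of_lt_limitOf hb
  exact ⟨j, hj, hbj, coe_lt_limitOf_of_forall_exists_gt hmax hj⟩

theorem almostClosed_iff : AlmostClosed I ↔ I.Nonempty ∧ (∀ j ∈ I, ∃ j' ∈ I, j < j') ∧
    ∀ y < limitOf I, Approaches I y → y ∈ coeImage I := by
  constructor
  · rintro ⟨ℓ, hcl, hleast⟩
    have hℓ : ℓ ∈ closure (coeImage I) := (hcl.symm ▸ mem_singleton ℓ : ℓ ∈ closure _ \ _).1
    have hlub : IsLUB (coeImage I) ℓ := by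
      refine ⟨fun z hz => (hleast.1 z hz).le, fun u hu => not_lt.1 fun hlt => ?_⟩
      obtain ⟨z, hz, hzI⟩ := mem_closure_iff.1 hℓ (Ioi u) isOpen_Ioi hlt
      exact not_le.2 hz (hu hzI)
    have hlimit : limitOf I = ℓ := (isLUB_limitOf I).unique hlub
    refine ⟨?_, fun j hj => ?_, fun y hy happ => ?_⟩
    · rcases I.eq_empty_or_nonempty with rfl | hne
      · simp at hℓ
      · exact hne
    · obtain ⟨_, hz, ⟨j', hj', rfl⟩⟩ :=
        mem_closure_iff.1 hℓ (Ioi ↑j) isOpen_Ioi (hleast.1 _ ⟨j, hj, rfl⟩)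
      exact ⟨j', hj', WithTop.coe_lt_coe.1 hz⟩
    · by_contra hyI
      have hy' : y ∈ closure (coeImage I) \ coeImage I := ⟨happ.mem_closure, hyI⟩
      rw [hcl, mem_singleton_iff, ← hlimit] at hy'
      exact hy.ne hy'
  · rintro ⟨hne, hmax, hlc⟩
    have hlimit : limitOf I ∉ coeImage I := fun ⟨j, hj, hjl⟩ =>
      (coe_lt_limitOf_of_forall_exists_gt hmax hj).ne hjl
    refine ⟨limitOf I, subset_antisymm ?_ ?_, ?_, ?_⟩
    · rintro y ⟨hycl, hyI⟩
      have hyle : y ≤ limitOf I :=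
        closure_minimal (isLUB_limitOf I).1 isClosed_Iic hycl
      rcases hyle.lt_or_eq with hlt | rfl
      · exact absurd (hlc y hlt (approaches_of_mem_closure hycl hyI)) hyI
      · exact mem_singleton _
    · rw [singleton_subset_iff]
      exact ⟨(approaches_limitOf_of_forall_exists_gt hne hmax).mem_closure, hlimit⟩
    · rintro _ ⟨j, hj, rfl⟩
      exact coe_lt_limitOf_of_forall_exists_gt hmax hj
    · exact fun s hs => (isLUB_limitOf I).2 fun z hz => (hs z hz).le

namespace AlmostClosed

theorem nonempty (hI : AlmostClosed I) : I.Nonempty := (almostClosed_iff.1 hI).1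

theorem exists_gt (hI : AlmostClosed I) : ∀ j ∈ I, ∃ j' ∈ I, j < j' := (almostClosed_iff.1 hI).2.1

theorem mem_coeImage_of_approaches (hI : AlmostClosed I) (hy : y < limitOf I)
    (happ : Approaches I y) : y ∈ coeImage I :=
  (almostClosed_iff.1 hI).2.2 y hy happ

theorem coe_lt_limitOf (hI : AlmostClosed I) {j : J} (hj : j ∈ I) : (j : WithTop J) < limitOf I :=
  coe_lt_limitOf_of_forall_exists_gt hI.exists_gt hj

theorem approaches_limitOf (hI : AlmostClosed I) : Approaches I (limitOf I) :=
  approaches_limitOf_of_forall_exists_gt hI.nonempty hI.exists_gt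

theorem top_mem_closure (hI : AlmostClosed I) :
    (⊤ : WithTop ↥I) ∈ closure (range ((↑) : ↥I → WithTop ↥I)) := by
  obtain ⟨j, hj⟩ := hI.nonempty
  refine mem_closure_of_exists_between ⟨_, ⟨⟨j, hj⟩, rfl⟩, le_top⟩ fun b hb => ?_
  obtain ⟨i, rfl⟩ := WithTop.ne_top_iff_exists.1 hb.ne
  obtain ⟨j', hj', hij'⟩ := hI.exists_gt i.1 i.2
  exact ⟨_, ⟨⟨j', hj'⟩, rfl⟩, WithTop.coe_lt_coe.2 hij', le_top⟩

theorem apply_top_mem_of_isClosed {X : Type*} [TopologicalSpace X] (hI : AlmostClosed I)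
    {g : WithTop ↥I → X} (hg : Continuous g) {C : Set X} (hC : IsClosed C)
    (hgC : ∀ i : ↥I, g i ∈ C) : g ⊤ ∈ C :=
  closure_minimal (range_subset_iff.2 hgC : range ((↑) : ↥I → WithTop ↥I) ⊆ g ⁻¹' C)
    (hC.preimage hg) hI.top_mem_closure

theorem approaches_of_isSuccLimit (hL : AlmostClosed L) {l : ↥L}
    (hl : Order.IsSuccLimit (l : WithTop ↥L)) : Approaches L (l.1 : WithTop J) := by
  set L' := {j ∈ L | j < l.1}
  have hne : L'.Nonempty := by
    obtain ⟨b, hb⟩ := not_isMin_iff.1 hl.not_isMin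
    obtain ⟨m, rfl⟩ := WithTop.ne_top_iff_exists.1 (hb.trans (WithTop.coe_lt_top l)).ne
    exact ⟨m.1, m.2, Subtype.coe_lt_coe.2 (WithTop.coe_lt_coe.1 hb)⟩
  have hmax : ∀ j ∈ L', ∃ j' ∈ L', j < j' := by
    rintro j ⟨hjL, hjl⟩
    obtain ⟨c, hc, hjc⟩ := hl.lt_iff_exists_lt.1
      (WithTop.coe_lt_coe.2 (show (⟨j, hjL⟩ : ↥L) < l from hjl))
    obtain ⟨m, rfl⟩ := WithTop.ne_top_iff_exists.1 (hc.trans (WithTop.coe_lt_top l)).ne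
    exact ⟨m.1, ⟨m.2, Subtype.coe_lt_coe.2 (WithTop.coe_lt_coe.1 hc)⟩,
      Subtype.coe_lt_coe.2 (WithTop.coe_lt_coe.1 hjc)⟩
  have hle : limitOf L' ≤ l.1 :=
    (isLUB_limitOf L').2 fun _ ⟨j, hj, hjz⟩ => hjz ▸ (WithTop.coe_lt_coe.2 hj.2).le
  have heq : limitOf L' = l.1 := by
    refine hle.antisymm (not_lt.1 fun hlt => ?_)
    obtain ⟨j₀, hj₀, hj₀eq⟩ := hL.mem_coeImage_of_approaches
      (hlt.trans (hL.coe_lt_limitOf l.2))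
      ((approaches_limitOf_of_forall_exists_gt hne hmax).mono fun j hj _ => hj.1)
    have hj₀l : j₀ < l.1 := WithTop.coe_lt_coe.1 (hj₀eq.trans_lt hlt)
    exact (coe_lt_limitOf_of_forall_exists_gt hmax ⟨hj₀, hj₀l⟩).ne hj₀eq
  exact (heq ▸ approaches_limitOf_of_forall_exists_gt hne hmax).mono fun j hj _ => hj.1

end AlmostClosed

theorem limitOf_mono (h : L ⊆ M) : limitOf L ≤ limitOf M :=
  (isLUB_limitOf L).mono (isLUB_limitOf M) (image_mono h)

end AlmostClosedSubsets

section WithTopInclusion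

variable {J : Type*} [LinearOrder J] [WellFoundedLT J] {L M : Set J}

noncomputable def withTopInclusion (h : L ⊆ M) : WithTop ↥L → WithTop ↥M :=
  WithTop.recTopCoe
    (wellFounded_lt.min {p | ∀ l : ↥L, (Set.inclusion h l : WithTop ↥M) < p}
      ⟨⊤, fun _ => WithTop.coe_lt_top _⟩)
    fun l => Set.inclusion h l

variable (h : L ⊆ M)

theorem coe_lt_withTopInclusion_top (l : ↥L) :
    (Set.inclusion h l : WithTop ↥M) < withTopInclusion h ⊤ :=
  wellFounded_lt.min_mem {p | ∀ l : ↥L, (Set.inclusion h l : WithTop ↥M) < p}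
    ⟨⊤, fun _ => WithTop.coe_lt_top _⟩ l

theorem withTopInclusion_top_le {c : WithTop ↥M}
    (hc : ∀ l : ↥L, (Set.inclusion h l : WithTop ↥M) < c) : withTopInclusion h ⊤ ≤ c :=
  wellFounded_lt.min_le (s := {p | ∀ l : ↥L, (Set.inclusion h l : WithTop ↥M) < p}) hc

theorem withTopInclusion_top_eq {c : WithTop ↥M}
    (hc : ∀ l : ↥L, (Set.inclusion h l : WithTop ↥M) < c)
    (hcofinal : ∀ b < c, ∃ l : ↥L, b < Set.inclusion h l) : withTopInclusion h ⊤ = c := by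
  refine (withTopInclusion_top_le h hc).antisymm (not_lt.1 fun hlt => ?_)
  obtain ⟨l, hl⟩ := hcofinal _ hlt
  exact (coe_lt_withTopInclusion_top h l).not_gt hl

theorem monotone_withTopInclusion : Monotone (withTopInclusion h) :=
  WithTop.monotone_iff.2
    ⟨fun _ _ hab => WithTop.coe_le_coe.2 ((Set.inclusion_le_inclusion h).2 hab),
    fun l => (coe_lt_withTopInclusion_top h l).le⟩

theorem continuous_withTopInclusion (hL : AlmostClosed L) : Continuous (withTopInclusion h) := by
  refine (monotone_withTopInclusion h).continuous_of_isSuccLimit fun x hx k hk => ?_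
  induction x using WithTop.recTopCoe with
  | top =>
    obtain ⟨l, hkl⟩ : ∃ l : ↥L, k ≤ Set.inclusion h l := by
      by_contra! hc
      exact hk.not_ge (withTopInclusion_top_le h hc)
    refine ⟨l, WithTop.coe_lt_top l, fun z hz => ?_⟩
    induction z using WithTop.recTopCoe with
    | top => exact hkl.trans_lt (coe_lt_withTopInclusion_top h l)
    | coe l' => exact hkl.trans_lt (WithTop.coe_lt_coe.2 ((Set.inclusion_lt_inclusion h).2
        (WithTop.coe_lt_coe.1 hz.1)))
  | coe l₀ =>
    obtain ⟨m, rfl⟩ := WithTop.ne_top_iff_exists.1 (hk.trans (WithTop.coe_lt_top _)).ne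
    obtain ⟨j, hj, hmj, hjl₀⟩ := (hL.approaches_of_isSuccLimit hx).2 m.1 (coe_lt_coe_iff_val.1 hk)
    refine ⟨(⟨j, hj⟩ : ↥L), coe_lt_coe_iff_val.2 hjl₀, fun z hz => ?_⟩
    obtain ⟨l, rfl⟩ := WithTop.ne_top_iff_exists.1 (hz.2.trans_lt (WithTop.coe_lt_top _)).ne
    exact coe_lt_coe_iff_val.2 (hmj.trans (coe_lt_coe_iff_val.1 hz.1))

theorem withTopInclusion_top_eq_top_or (hL : AlmostClosed L) (hM : AlmostClosed M) :
    withTopInclusion h ⊤ = ⊤ ∨ ∃ x : ↥M, limitOf L = x.1 ∧ withTopInclusion h ⊤ = x := by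
  have hcofinal {c : WithTop ↥M}
      (hc : ∀ m : ↥M, (m : WithTop ↥M) < c → (m.1 : WithTop J) < limitOf L) :
      ∀ b < c, ∃ l : ↥L, b < Set.inclusion h l := fun b hb => by
    obtain ⟨m, rfl⟩ := WithTop.ne_top_iff_exists.1 (hb.trans_le le_top).ne
    obtain ⟨j, hj, hmj⟩ := exists_gt_of_lt_limitOf (hc m hb)
    exact ⟨⟨j, hj⟩, coe_lt_coe_iff_val.2 hmj⟩
  rcases (limitOf_mono h).lt_or_eq with hlt | heq
  · obtain ⟨x, hx, hxL⟩ := hM.mem_coeImage_of_approaches hlt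
      (hL.approaches_limitOf.mono fun j hj _ => h hj)
    refine Or.inr ⟨⟨x, hx⟩, hxL.symm, withTopInclusion_top_eq h (fun l => ?_) (hcofinal ?_)⟩
    · exact coe_lt_coe_iff_val.2 ((hL.coe_lt_limitOf l.2).trans_eq hxL.symm)
    · exact fun m hm => (coe_lt_coe_iff_val.1 hm).trans_eq hxL
  · refine Or.inl (withTopInclusion_top_eq h (fun _ => WithTop.coe_lt_top _) (hcofinal ?_))
    exact fun m _ => heq ▸ hM.coe_lt_limitOf m.2

end WithTopInclusion

section JClosed

variable {J : Type*} [LinearOrder J]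

theorem isJConvergence_iff {X : Type*} [TopologicalSpace X] :
    IsJConvergence J X ↔ ∀ C : Set X, JClosedSet J X C → IsClosed C := by
  refine ⟨fun hX C hC => not_not.1 fun hCcl => ?_, fun h A hA => ?_⟩
  · obtain ⟨I, hI, f, hf, hfC, hftop⟩ := hX C hCcl
    exact hftop (hC I hI f hf hfC)
  · by_contra! hno
    exact hA (h A hno)

variable {X : Type*}

theorem isOpen_jTop_of_jOpenSet {t : TopologicalSpace X} {U : Set X} (hU : JOpenSet J X U) :
    IsOpen[jTop J X] U :=
  isOpen_generateFrom_of_mem hU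

theorem continuous_jTop_of_continuous {Y : Type*} {tX : TopologicalSpace X}
    {tY : TopologicalSpace Y} {g : X → Y} (hg : Continuous g) :
    Continuous[jTop J X, jTop J Y] g :=
  continuous_generateFrom_iff.2 fun _ hU =>
    isOpen_jTop_of_jOpenSet fun I hI f hf hfU => hU I hI (g ∘ f) (hg.comp hf) hfU

variable [WellFoundedLT J]

theorem jClosedSet_of_isClosed [TopologicalSpace X] {C : Set X} (hC : IsClosed C) :
    JClosedSet J X C :=
  fun _ hI _ hf hfC => hI.apply_top_mem_of_isClosed hf hC hfC

theorem AlmostClosed.exists_withTopInclusion_top_eq_of_mem_closure {M : Set J}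
    (hM : AlmostClosed M) {C : Set (WithTop ↥M)} {c : WithTop ↥M} (hc : c ∈ closure C)
    (hcC : c ∉ C) (hmin : ∀ y ∈ closure C, y < c → y ∈ C) :
    ∃ (R : Set J) (h : R ⊆ M), AlmostClosed R ∧
      (∀ r : ↥R, (Set.inclusion h r : WithTop ↥M) ∈ C) ∧ withTopInclusion h ⊤ = c := by
  obtain ⟨⟨_, hzC, hzc⟩, hdense⟩ := exists_between_of_mem_closure hc hcC
  set R : Set J := Subtype.val '' {m : ↥M | (m : WithTop ↥M) ∈ C ∧ (m : WithTop ↥M) < c}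
  have hRM : R ⊆ M := by
    rintro _ ⟨m, -, rfl⟩
    exact m.2
  have hR (r : ↥R) :
      (Set.inclusion hRM r : WithTop ↥M) ∈ C ∧ (Set.inclusion hRM r : WithTop ↥M) < c := by
    obtain ⟨_, ⟨m, hm, rfl⟩⟩ := r
    exact hm
  have hRcofinal : ∀ b < c, ∃ r : ↥R, b < Set.inclusion hRM r := fun b hb => by
    obtain ⟨z, hzC, hbz, hzc⟩ := hdense b hb
    obtain ⟨m, rfl⟩ := WithTop.ne_top_iff_exists.1 (hzc.trans_le le_top).ne
    exact ⟨⟨m.1, m, ⟨hzC, hzc⟩, rfl⟩, hbz⟩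
  refine ⟨R, hRM, almostClosed_iff.2 ⟨?_, fun j hj => ?_, fun y hy happ => ?_⟩, fun r => (hR r).1,
    withTopInclusion_top_eq hRM (fun r => (hR r).2) hRcofinal⟩
  · obtain ⟨m, rfl⟩ := WithTop.ne_top_iff_exists.1 (hzc.trans_le le_top).ne
    exact ⟨m.1, m, ⟨hzC, hzc⟩, rfl⟩
  · obtain ⟨r, hr⟩ := hRcofinal _ (hR ⟨j, hj⟩).2
    exact ⟨r.1, r.2, WithTop.coe_lt_coe.1 (coe_lt_coe_iff_val.1 hr)⟩
  · obtain ⟨x, hx, rfl⟩ := hM.mem_coeImage_of_approaches (hy.trans_le (limitOf_mono hRM))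
      (happ.mono fun j hj _ => hRM hj)
    obtain ⟨r, hr, hxr⟩ := exists_gt_of_lt_limitOf hy
    have hxc : ((⟨x, hx⟩ : ↥M) : WithTop ↥M) < c :=
      (coe_lt_coe_iff_val.2 hxr).trans (hR ⟨r, hr⟩).2
    have hxcl : ((⟨x, hx⟩ : ↥M) : WithTop ↥M) ∈ closure C :=
      closure_mono (range_subset_iff.2 fun r => (hR r).1) (coe_mem_closure_of_approaches hRM happ)
    exact ⟨x, ⟨⟨x, hx⟩, ⟨hmin _ hxcl hxc, hxc⟩, rfl⟩, rfl⟩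

theorem AlmostClosed.isClosed_of_jClosedSet {M : Set J} (hM : AlmostClosed M)
    {C : Set (WithTop ↥M)} (hC : JClosedSet J (WithTop ↥M) C) : IsClosed C := by
  by_contra hCcl
  have hne : (closure C \ C).Nonempty := by
    obtain ⟨c, hc, hcC⟩ := not_subset.1 (mt closure_subset_iff_isClosed.1 hCcl)
    exact ⟨c, hc, hcC⟩
  obtain ⟨hc, hcC⟩ := wellFounded_lt.min_mem _ hne
  obtain ⟨R, hRM, hR, hRC, htop⟩ := hM.exists_withTopInclusion_top_eq_of_mem_closure hc hcC
    fun y hy hyc => not_not.1 fun hyC =>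
      wellFounded_lt.not_lt_min (closure C \ C) (x := y) ⟨hy, hyC⟩ hyc
  exact hcC (htop ▸ hC R hR _ (continuous_withTopInclusion hRM hR) hRC)

theorem jTop_le {t : TopologicalSpace X} : jTop J X ≤ t :=
  fun _ hU => isOpen_jTop_of_jOpenSet (jClosedSet_of_isClosed hU.isClosed_compl)

theorem AlmostClosed.continuous_jTop {I : Set J} (hI : AlmostClosed I) {t : TopologicalSpace X}
    {f : WithTop ↥I → X} (hf : Continuous f) : Continuous[_, jTop J X] f := by
  refine continuous_generateFrom_iff.2 fun U hU => ?_
  refine isClosed_compl_iff.1 (hI.isClosed_of_jClosedSet fun K hK q hq hqU => ?_)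
  exact hU K hK (f ∘ q) (hf.comp hq) hqU

theorem jClosedSet_jTop_iff {t : TopologicalSpace X} {C : Set X} :
    @JClosedSet J _ X (jTop J X) C ↔ JClosedSet J X C :=
  ⟨fun h I hI f hf => h I hI f (hI.continuous_jTop hf),
    fun h I hI f hf => h I hI f (continuous_le_rng jTop_le hf)⟩

theorem jTop_jTop {t : TopologicalSpace X} : @jTop J _ X (jTop J X) = jTop J X := by
  refine congrArg generateFrom (ext fun _ => ?_)
  exact jClosedSet_jTop_iff

theorem jTop_eq_self {t : TopologicalSpace X} (hX : IsJConvergence J X) : jTop J X = t :=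
  jTop_le.antisymm (le_generateFrom fun _ hU => isClosed_compl_iff.1 (isJConvergence_iff.1 hX _ hU))

end JClosed

section SupExtend

variable {J : Type*} [LinearOrder J] [WellFoundedLT J] {κ : Type*} [LinearOrder κ]
  [WellFoundedLT κ]

noncomputable def supExtend {L : Set J} (w : ↥L → WithTop κ) : WithTop ↥L → WithTop κ :=
  WithTop.recTopCoe (lub (range w)) w

theorem continuous_supExtend {L : Set J} (hL : AlmostClosed L) {w : ↥L → WithTop κ}
    (hw : Monotone w) (hlim : ∀ l : ↥L, Approaches L l.1 → IsLUB (w '' Iio l) (w l)) :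
    Continuous (supExtend w) := by
  have hmono : Monotone (supExtend w) :=
    WithTop.monotone_iff.2 ⟨hw, fun l => (isLUB_lub _).1 ⟨l, rfl⟩⟩
  refine hmono.continuous_of_isSuccLimit fun x hx k hk => ?_
  obtain ⟨l, hlx, hkl⟩ : ∃ l : ↥L, (l : WithTop ↥L) < x ∧ k < w l := by
    induction x using WithTop.recTopCoe with
    | top =>
      obtain ⟨_, ⟨l, rfl⟩, hkl⟩ := (lt_isLUB_iff (isLUB_lub _)).1 hk
      exact ⟨l, WithTop.coe_lt_top l, hkl⟩
    | coe l₀ =>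
      obtain ⟨_, ⟨l, hl, rfl⟩, hkl⟩ :=
        (lt_isLUB_iff (hlim l₀ (hL.approaches_of_isSuccLimit hx))).1 hk
      exact ⟨l, WithTop.coe_lt_coe.2 hl, hkl⟩
  exact ⟨l, hlx, fun z hz => hkl.trans_le (hmono hz.1.le)⟩

end SupExtend

section Staircases

variable {J : Type*} [LinearOrder J] {κ : Type*} [LinearOrder κ] {M : Set J}

-- A partial monotone path `l ↦ (l, w l)` through `S` above the row `s`, closed under limits.
structure Staircase (S : Set (WithTop ↥M × WithTop κ)) (s : ↥M) where
  L : Set J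
  w : J → WithTop κ
  nonempty : L.Nonempty
  subset : L ⊆ M
  gt : ∀ j ∈ L, s.1 < j
  mem : ∀ l : ↥L, ((Set.inclusion subset l : WithTop ↥M), w l) ∈ S
  monotoneOn : MonotoneOn w L
  mem_of_approaches : ∀ x : J, Approaches L x → (∃ l ∈ L, x ≤ l) → x ∈ L
  isLUB : ∀ j ∈ L, Approaches L j → IsLUB (w '' (L ∩ Iio j)) (w j)

namespace Staircase

variable {S : Set (WithTop ↥M × WithTop κ)} {s : ↥M}

instance : Preorder (Staircase S s) where
  le π π' := π.L ⊆ π'.L ∧ (∀ a ∈ π'.L, a ∉ π.L → ∀ b ∈ π.L, b < a) ∧ EqOn π'.w π.w π.L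
  le_refl π := ⟨subset_rfl, fun _ ha hna => (hna ha).elim, eqOn_refl _ _⟩
  le_trans π₁ π₂ π₃ h₁₂ h₂₃ := by
    refine ⟨h₁₂.1.trans h₂₃.1, fun a ha hna b hb => ?_, fun j hj => ?_⟩
    · by_cases ha₂ : a ∈ π₂.L
      · exact h₁₂.2.1 a ha₂ hna b hb
      · exact h₂₃.2.1 a ha ha₂ b (h₁₂.1 hb)
    · rw [h₂₃.2.2 (h₁₂.1 hj), h₁₂.2.2 hj]

theorem mem_of_le {π π' : Staircase S s} (h : π ≤ π') {a b : J} (ha : a ∈ π'.L) (hb : b ∈ π.L)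
    (hab : a ≤ b) : a ∈ π.L :=
  not_not.1 fun hna => (h.2.1 a ha hna b hb).not_ge hab

theorem nonempty_of_mem (h : ∃ m : ↥M, s < m ∧ ∃ v, ((m : WithTop ↥M), v) ∈ S) :
    Nonempty (Staircase S s) := by
  obtain ⟨m, hsm, v, hv⟩ := h
  exact ⟨{
    L := {m.1}
    w := fun _ => v
    nonempty := singleton_nonempty _
    subset := singleton_subset_iff.2 m.2
    gt := fun _ hj => hj ▸ hsm
    mem := fun ⟨_, hj⟩ => by
      obtain rfl := mem_singleton_iff.1 hj
      exact hv
    monotoneOn := fun _ _ _ _ _ => le_rfl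
    mem_of_approaches := fun x hx => (not_approaches_singleton _ _ hx).elim
    isLUB := fun j _ hj => (not_approaches_singleton _ _ hj).elim }⟩

section Chain

variable (c : Set (Staircase S s))

open Classical in
noncomputable def chainValue (j : J) : WithTop κ :=
  if h : ∃ π ∈ c, j ∈ π.L then h.choose.w j else ⊤

variable {c}

theorem chainValue_eqOn (hc : IsChain (· ≤ ·) c) {π : Staircase S s} (hπ : π ∈ c) :
    EqOn (chainValue c) π.w π.L :=
  fun j hj => by
    have h : ∃ π ∈ c, j ∈ π.L := ⟨π, hπ, hj⟩
    obtain ⟨π', -, hle, hle'⟩ := hc.directedOn _ h.choose_spec.1 _ hπ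
    rw [chainValue, dif_pos h, ← hle.2.2 h.choose_spec.2, hle'.2.2 hj]

theorem mem_of_mem_biUnion (hc : IsChain (· ≤ ·) c) {π : Staircase S s} (hπ : π ∈ c) {a b : J}
    (ha : a ∈ ⋃ π ∈ c, π.L) (hb : b ∈ π.L) (hab : a ≤ b) : a ∈ π.L := by
  obtain ⟨π', hπ', ha⟩ := mem_iUnion₂.1 ha
  obtain ⟨π'', -, hle, hle'⟩ := hc.directedOn _ hπ _ hπ'
  exact mem_of_le hle (hle'.1 ha) hb hab

theorem approaches_of_approaches_biUnion (hc : IsChain (· ≤ ·) c) {π : Staircase S s}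
    (hπ : π ∈ c) {x b : J} (hb : b ∈ π.L) (hxb : x ≤ b) (h : Approaches (⋃ π ∈ c, π.L) x) : Approaches π.L x :=
  h.mono fun _ hj hjx => mem_of_mem_biUnion hc hπ hj hb ((WithTop.coe_lt_coe.1 hjx).le.trans hxb)

noncomputable def sUnion (hc : IsChain (· ≤ ·) c) (hne : c.Nonempty) : Staircase S s where
  L := ⋃ π ∈ c, π.L
  w := chainValue c
  nonempty := hne.some.nonempty.mono (subset_biUnion_of_mem hne.some_mem)
  subset := iUnion₂_subset fun π _ => π.subset
  gt j hj := by
    obtain ⟨π, -, hj⟩ := mem_iUnion₂.1 hj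
    exact π.gt j hj
  mem := fun ⟨j, hj⟩ => by
    obtain ⟨π, hπ, hj⟩ := mem_iUnion₂.1 hj
    rw [chainValue_eqOn hc hπ hj]
    exact π.mem ⟨j, hj⟩
  monotoneOn j₁ hj₁ j₂ hj₂ hle := by
    obtain ⟨π₁, hπ₁, hj₁⟩ := mem_iUnion₂.1 hj₁
    obtain ⟨π₂, hπ₂, hj₂⟩ := mem_iUnion₂.1 hj₂
    obtain ⟨π, hπ, hle₁, hle₂⟩ := hc.directedOn _ hπ₁ _ hπ₂
    rw [chainValue_eqOn hc hπ (hle₁.1 hj₁), chainValue_eqOn hc hπ (hle₂.1 hj₂)]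
    exact π.monotoneOn (hle₁.1 hj₁) (hle₂.1 hj₂) hle
  mem_of_approaches x hx := fun ⟨l, hl, hxl⟩ => by
    obtain ⟨π, hπ, hl⟩ := mem_iUnion₂.1 hl
    exact subset_biUnion_of_mem hπ
      (π.mem_of_approaches x (approaches_of_approaches_biUnion hc hπ hl hxl hx) ⟨l, hl, hxl⟩)
  isLUB j hj hx := by
    obtain ⟨π, hπ, hj⟩ := mem_iUnion₂.1 hj
    have hinter : (⋃ π ∈ c, π.L) ∩ Iio j = π.L ∩ Iio j :=
      subset_antisymm (fun a ha => ⟨mem_of_mem_biUnion hc hπ ha.1 hj ha.2.le, ha.2⟩)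
        (inter_subset_inter_left _ (subset_biUnion_of_mem hπ))
    rw [hinter, ((chainValue_eqOn hc hπ).mono inter_subset_left).image_eq,
      chainValue_eqOn hc hπ hj]
    exact π.isLUB j hj (approaches_of_approaches_biUnion hc hπ hj le_rfl hx)

theorem le_sUnion (hc : IsChain (· ≤ ·) c) (hne : c.Nonempty) {π : Staircase S s} (hπ : π ∈ c) :
    π ≤ sUnion hc hne := by
  refine ⟨subset_biUnion_of_mem hπ, fun a ha hna b hb => ?_, chainValue_eqOn hc hπ⟩
  exact not_le.1 fun hab => hna (mem_of_mem_biUnion hc hπ ha hb hab)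

end Chain

section Extend

variable (π : Staircase S s) {x : ↥M}

theorem approaches_of_approaches_insert {y : WithTop J} (hy : y ≤ x.1)
    (h : Approaches (insert x.1 π.L) y) : Approaches π.L y :=
  h.mono fun _ hj hjy => hj.resolve_left (by rintro rfl; exact (hjy.trans_le hy).false)

theorem update_eqOn (hLx : ∀ j ∈ π.L, j < x.1) (v : WithTop κ) :
    EqOn (Function.update π.w x.1 v) π.w π.L :=
  fun j hj => Function.update_of_ne (hLx j hj).ne _ _

variable (hsx : s < x) (hLx : ∀ j ∈ π.L, j < x.1) {v : WithTop κ}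
  (hv : ((x : WithTop ↥M), v) ∈ S) (hwv : ∀ j ∈ π.L, π.w j ≤ v)
  (hlub : Approaches π.L x.1 → IsLUB (π.w '' π.L) v)
  (hgap : ∀ y : J, y < x.1 → Approaches π.L y → ∃ l ∈ π.L, y ≤ l)

def extend : Staircase S s where
  L := insert x.1 π.L
  w := Function.update π.w x.1 v
  nonempty := insert_nonempty _ _
  subset := insert_subset x.2 π.subset
  gt := forall_mem_insert.2 ⟨hsx, π.gt⟩
  mem := fun ⟨j, hj⟩ => by
    rcases hj with rfl | hj
    · rw [Function.update_self]
      exact hv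
    · rw [update_eqOn π hLx v hj]
      exact π.mem ⟨j, hj⟩
  monotoneOn j₁ hj₁ j₂ hj₂ hle := by
    rcases hj₁ with rfl | hj₁ <;> rcases hj₂ with rfl | hj₂
    · exact le_rfl
    · exact absurd (hLx j₂ hj₂) (not_lt.2 hle)
    · rw [update_eqOn π hLx v hj₁, Function.update_self]
      exact hwv j₁ hj₁
    · rw [update_eqOn π hLx v hj₁, update_eqOn π hLx v hj₂]
      exact π.monotoneOn hj₁ hj₂ hle
  mem_of_approaches y hy := fun ⟨l, hl, hyl⟩ => by
    have hlx : l ≤ x.1 := by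
      rcases hl with rfl | hl
      exacts [le_rfl, (hLx l hl).le]
    rcases (hyl.trans hlx).lt_or_eq with hyx | rfl
    · have hyπ := approaches_of_approaches_insert π (WithTop.coe_le_coe.2 hyx.le) hy
      obtain ⟨l', hl', hyl'⟩ := hgap y hyx hyπ
      exact mem_insert_of_mem _ (π.mem_of_approaches y hyπ ⟨l', hl', hyl'⟩)
    · exact mem_insert _ _
  isLUB j hj hjapp := by
    rcases hj with rfl | hj
    · have hinter : insert x.1 π.L ∩ Iio x.1 = π.L := by
        rw [insert_inter_of_notMem (show x.1 ∉ Iio x.1 from lt_irrefl _)]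
        exact inter_eq_left.2 hLx
      rw [hinter, (update_eqOn π hLx v).image_eq, Function.update_self]
      exact hlub (approaches_of_approaches_insert π le_rfl hjapp)
    · rw [insert_inter_of_notMem (show x.1 ∉ Iio j from not_lt.2 (hLx j hj).le),
        ((update_eqOn π hLx v).mono inter_subset_left).image_eq, update_eqOn π hLx v hj]
      exact π.isLUB j hj
        (approaches_of_approaches_insert π (WithTop.coe_le_coe.2 (hLx j hj).le) hjapp)

theorem lt_extend : π < π.extend hsx hLx hv hwv hlub hgap := by
  refine lt_of_le_not_ge ⟨subset_insert _ _, fun a ha hna b hb => ?_, update_eqOn π hLx v⟩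
    fun h => (hLx _ (h.1 (mem_insert _ _))).false
  rcases ha with rfl | ha
  exacts [hLx b hb, (hna ha).elim]

end Extend


theorem not_isMax_of_mem_upperBounds (π : Staircase S s)
    (hnext : ∀ m : ↥M, s < m → ∀ v, ((m : WithTop ↥M), v) ∈ S →
      ∃ m' > m, ∃ v' ≥ v, ((m' : WithTop ↥M), v') ∈ S)
    {l : J} (hl : l ∈ π.L) (hlmax : ∀ j ∈ π.L, j ≤ l) : ¬IsMax π := by
  obtain ⟨m', hlm', v', hv', hm'S⟩ :=
    hnext (Set.inclusion π.subset ⟨l, hl⟩) (π.gt l hl) _ (π.mem ⟨l, hl⟩)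
  have hlm' : l < m'.1 := hlm'
  have hnot {y : J} (hly : l < y) : ¬Approaches π.L y := fun h => by
    obtain ⟨j, hj, hlj, -⟩ := h.2 l (WithTop.coe_lt_coe.2 hly)
    exact (hlmax j hj).not_gt (WithTop.coe_lt_coe.1 hlj)
  exact not_isMax_of_lt (π.lt_extend ((π.gt l hl).trans hlm')
    (fun j hj => (hlmax j hj).trans_lt hlm') hm'S
    (fun j hj => (π.monotoneOn hj hl (hlmax j hj)).trans hv') (fun h => (hnot hlm' h).elim)
    fun y _ hy => ⟨l, hl, not_lt.1 fun hly => hnot hly hy⟩)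

theorem almostClosed_of_forall_exists_gt [WellFoundedLT J] (π : Staircase S s)
    (hnomax : ∀ j ∈ π.L, ∃ j' ∈ π.L, j < j') : AlmostClosed π.L := by
  refine almostClosed_iff.2 ⟨π.nonempty, hnomax, fun y hy happ => ?_⟩
  obtain ⟨x, rfl⟩ := WithTop.ne_top_iff_exists.1 (hy.trans_le le_top).ne
  obtain ⟨l, hl, hxl⟩ := exists_gt_of_lt_limitOf hy
  exact ⟨x, π.mem_of_approaches x happ ⟨l, hl, (WithTop.coe_lt_coe.1 hxl).le⟩, rfl⟩

theorem continuous_supExtend_comp_val [WellFoundedLT J] [WellFoundedLT κ] (π : Staircase S s)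
    (hL : AlmostClosed π.L) : Continuous (supExtend fun l : ↥π.L => π.w l) := by
  refine continuous_supExtend hL (fun a b hab => π.monotoneOn a.2 b.2 hab) fun l hl => ?_
  have himage : (fun l : ↥π.L => π.w l) '' Iio l = π.w '' (π.L ∩ Iio l.1) := by
    ext
    constructor
    · rintro ⟨a, ha, rfl⟩
      exact ⟨a.1, ⟨a.2, ha⟩, rfl⟩
    · rintro ⟨a, ⟨ha, hal⟩, rfl⟩
      exact ⟨⟨a, ha⟩, hal, rfl⟩
  exact himage ▸ π.isLUB l.1 l.2 hl

theorem not_isMax_of_forall_exists_gt [WellFoundedLT J] [WellFoundedLT κ] (hM : AlmostClosed M)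
    (hS : JClosedSet J (WithTop ↥M × WithTop κ) S) (htop : ∀ v, ((⊤ : WithTop ↥M), v) ∉ S)
    (π : Staircase S s) (hnomax : ∀ j ∈ π.L, ∃ j' ∈ π.L, j < j') : ¬IsMax π := by
  have hL := π.almostClosed_of_forall_exists_gt hnomax
  have hw := π.continuous_supExtend_comp_val hL
  have hmem := hS π.L hL _ ((continuous_withTopInclusion π.subset hL).prodMk hw) π.mem
  rcases withTopInclusion_top_eq_top_or π.subset hL hM with htop' | ⟨x, hxL, hx⟩
  · exact fun _ => htop _ (htop' ▸ hmem)
  rw [hx] at hmem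
  have hLx (j : J) (hj : j ∈ π.L) : j < x.1 :=
    WithTop.coe_lt_coe.1 ((hL.coe_lt_limitOf hj).trans_eq hxL)
  obtain ⟨j, hj⟩ := π.nonempty
  refine not_isMax_of_lt (π.lt_extend ((π.gt j hj).trans (hLx j hj)) hLx hmem
    (fun j hj => (isLUB_lub _).1 ⟨⟨j, hj⟩, rfl⟩)
    (fun _ => (image_eq_range π.w π.L).symm ▸ isLUB_lub _) fun y hy _ => ?_)
  obtain ⟨l, hl, hyl⟩ := exists_gt_of_lt_limitOf (hxL.symm ▸ WithTop.coe_lt_coe.2 hy)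
  exact ⟨l, hl, (WithTop.coe_lt_coe.1 hyl).le⟩

end Staircase

end Staircases

section RowLemma

variable {J : Type*} [LinearOrder J] [WellFoundedLT J] {κ : Type*} [LinearOrder κ] {M : Set J}
  {S : Set (WithTop ↥M × WithTop κ)}

theorem top_mem_of_frequently (hM : AlmostClosed M)
    (hS : JClosedSet J (WithTop ↥M × WithTop κ) S) (v : WithTop κ)
    (hv : ∀ m : ↥M, ∃ m' > m, ((m' : WithTop ↥M), v) ∈ S) : ((⊤ : WithTop ↥M), v) ∈ S := by
  have hC : IsClosed {z : WithTop ↥M | (z, v) ∈ S} := hM.isClosed_of_jClosedSet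
    fun I hI a ha haS => hS I hI (fun z => (a z, v)) (ha.prodMk continuous_const) haS
  obtain ⟨j, hj⟩ := hM.nonempty
  refine hC.closure_subset (mem_closure_of_exists_between ?_ fun b hb => ?_)
  · obtain ⟨m, -, hm⟩ := hv ⟨j, hj⟩
    exact ⟨_, hm, le_top⟩
  · obtain ⟨m, rfl⟩ := WithTop.ne_top_iff_exists.1 hb.ne
    obtain ⟨m', hmm', hm'⟩ := hv m
    exact ⟨_, hm', WithTop.coe_lt_coe.2 hmm', le_top⟩

variable [WellFoundedLT κ]

theorem exists_top_mem_of_forall_exists_ge (hM : AlmostClosed M)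
    (hS : JClosedSet J (WithTop ↥M × WithTop κ) S) {s : ↥M}
    (hs : ∃ m : ↥M, s < m ∧ ∃ v, ((m : WithTop ↥M), v) ∈ S)
    (hnext : ∀ m : ↥M, s < m → ∀ v, ((m : WithTop ↥M), v) ∈ S →
      ∃ m' > m, ∃ v' ≥ v, ((m' : WithTop ↥M), v') ∈ S) :
    ∃ v, ((⊤ : WithTop ↥M), v) ∈ S := by
  by_contra! htop
  have := Staircase.nonempty_of_mem hs
  obtain ⟨π, hπ⟩ := zorn_le_nonempty (α := Staircase S s) fun _ hc hne =>
    ⟨Staircase.sUnion hc hne, fun _ => Staircase.le_sUnion hc hne⟩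
  by_cases hmax : ∃ l ∈ π.L, ∀ j ∈ π.L, j ≤ l
  · obtain ⟨l, hl, hlmax⟩ := hmax
    exact π.not_isMax_of_mem_upperBounds hnext hl hlmax hπ
  · push Not at hmax
    exact π.not_isMax_of_forall_exists_gt hM hS htop hmax hπ

theorem exists_top_mem_of_jClosedSet (hM : AlmostClosed M)
    (hS : JClosedSet J (WithTop ↥M × WithTop κ) S)
    (hrows : ∀ m : ↥M, ∃ v, ((m : WithTop ↥M), v) ∈ S) : ∃ v, ((⊤ : WithTop ↥M), v) ∈ S := by
  by_contra! htop
  -- `B` consists of the levels below which `S` eventually stays; by minimality of `min B`, every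
  -- point of `S` beyond the row `s` is followed by a point of `S` at least as high.
  set B := {ρ : WithTop κ | ∃ s : ↥M, ∀ m > s, ∀ v, ((m : WithTop ↥M), v) ∈ S → v < ρ}
  have hB : B.Nonempty := by
    refine ⟨⊤, not_not.1 fun h => htop ⊤ (top_mem_of_frequently hM hS ⊤ fun s => ?_)⟩
    obtain ⟨m, hsm, v, hv, hvtop⟩ : ∃ m > s, ∃ v, ((m : WithTop ↥M), v) ∈ S ∧ ¬v < ⊤ := by
      by_contra! h'
      exact h ⟨s, h'⟩
    exact ⟨m, hsm, not_lt_top_iff.1 hvtop ▸ hv⟩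
  obtain ⟨s, hs⟩ := wellFounded_lt.min_mem B hB
  obtain ⟨j, hj, hsj⟩ := hM.exists_gt s.1 s.2
  obtain ⟨v, hv⟩ := exists_top_mem_of_forall_exists_ge hM hS ⟨⟨j, hj⟩, hsj, hrows _⟩
    fun m hsm v hv => by
      have hvB : v ∉ B := fun h => wellFounded_lt.not_lt_min B h (hs m hsm v hv)
      by_contra! hnext
      exact hvB ⟨m, fun m' hm' v' hv' => not_le.1 fun hle => hnext m' hm' v' hle hv'⟩
  exact htop v hv

theorem jClosedSet_compl_setOf_forall_mem {Φ Z : Type*} {tΦ : TopologicalSpace Φ}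
    {tZ : TopologicalSpace Z} {K : Set J}
    (G : Φ → WithTop ↥K → Z)
    (hG : ∀ N : Set J, AlmostClosed N → ∀ a : WithTop ↥N → Φ, Continuous a →
      ∀ b : WithTop ↥N → WithTop ↥K, Continuous b → Continuous fun n => G (a n) (b n))
    {U : Set Z} (hU : IsOpen U) : JClosedSet J Φ {φ | ∀ z, G φ z ∈ U}ᶜ := by
  intro P hP p hp hpU
  have hS : JClosedSet J (WithTop ↥P × WithTop ↥K) {q | G (p q.1) q.2 ∈ Uᶜ} :=
    fun N hN r hr hrS => hN.apply_top_mem_of_isClosed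
      (hG N hN _ (hp.comp (continuous_fst.comp hr)) _ (continuous_snd.comp hr))
      hU.isClosed_compl hrS
  obtain ⟨z, hz⟩ := exists_top_mem_of_jClosedSet hP hS fun i => not_forall.1 (hpU i)
  exact fun h => hz (h z)

end RowLemma

section Evaluation

variable {J : Type*} [LinearOrder J] [WellFoundedLT J]

theorem AlmostClosed.exists_range_withTopInclusion_eq_Ioc {L : Set J} (hL : AlmostClosed L)
    {x₀ z₀ : WithTop ↥L} (hz₀ : Order.IsSuccLimit z₀) (hx₀ : x₀ < z₀) :
    ∃ (K : Set J) (h : K ⊆ L), AlmostClosed K ∧ range (withTopInclusion h) = Ioc x₀ z₀ := by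
  set K := Subtype.val '' {l : ↥L | x₀ < l ∧ (l : WithTop ↥L) < z₀}
  have hKL : K ⊆ L := by
    rintro _ ⟨l, -, rfl⟩
    exact l.2
  have hK (k : ↥K) : x₀ < Set.inclusion hKL k ∧ (Set.inclusion hKL k : WithTop ↥L) < z₀ := by
    obtain ⟨_, l, hl, rfl⟩ := k
    exact hl
  have hmemK {l : ↥L} (h₁ : x₀ < l) (h₂ : (l : WithTop ↥L) < z₀) : l.1 ∈ K := ⟨l, ⟨h₁, h₂⟩, rfl⟩
  have hcofinal : ∀ b < z₀, ∃ k : ↥K, b < Set.inclusion hKL k := fun b hb => by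
    obtain ⟨c, hcz, hbc⟩ := hz₀.lt_iff_exists_lt.1 (max_lt hb hx₀)
    obtain ⟨l, rfl⟩ := WithTop.ne_top_iff_exists.1 (hcz.trans_le le_top).ne
    exact ⟨⟨l.1, hmemK ((le_max_right _ _).trans_lt hbc) hcz⟩, (le_max_left _ _).trans_lt hbc⟩
  have htop : withTopInclusion hKL ⊤ = z₀ :=
    withTopInclusion_top_eq hKL (fun k => (hK k).2) hcofinal
  have hKac : AlmostClosed K := by
    refine almostClosed_iff.2 ⟨?_, fun j hj => ?_, fun y hy happ => ?_⟩
    · obtain ⟨k, -⟩ := hcofinal x₀ hx₀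
      exact ⟨k.1, k.2⟩
    · obtain ⟨k, hk⟩ := hcofinal _ (hK ⟨j, hj⟩).2
      exact ⟨k.1, k.2, WithTop.coe_lt_coe.1 (coe_lt_coe_iff_val.1 hk)⟩
    · obtain ⟨x, hx, rfl⟩ := hL.mem_coeImage_of_approaches (hy.trans_le (limitOf_mono hKL))
        (happ.mono fun j hj _ => hKL hj)
      obtain ⟨k₁, hk₁, hk₁x⟩ := happ.1
      obtain ⟨k₂, hk₂, hxk₂⟩ := exists_gt_of_lt_limitOf hy
      refine ⟨x, hmemK (l := ⟨x, hx⟩) ?_ ?_, rfl⟩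
      · exact (hK ⟨k₁, hk₁⟩).1.trans (coe_lt_coe_iff_val.2 hk₁x)
      · exact (coe_lt_coe_iff_val.2 hxk₂).trans (hK ⟨k₂, hk₂⟩).2
  refine ⟨K, hKL, hKac, subset_antisymm (range_subset_iff.2 fun z => ?_) fun z hz => ?_⟩
  · induction z using WithTop.recTopCoe with
    | top => exact htop.symm ▸ right_mem_Ioc.2 hx₀
    | coe k => exact ⟨(hK k).1, (hK k).2.le⟩
  · rcases hz.2.lt_or_eq with hlt | rfl
    · obtain ⟨l, rfl⟩ := WithTop.ne_top_iff_exists.1 (hlt.trans_le le_top).ne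
      exact ⟨(⟨l.1, hmemK hz.1 hlt⟩ : ↥K), rfl⟩
    · exact ⟨⊤, htop⟩

theorem continuous_eval_of_path {E Z Φ : Type*} {tE : TopologicalSpace E}
    {tZ : TopologicalSpace Z} {tΦ : TopologicalSpace Φ} (app : Φ → E → Z)
    (happ : ∀ φ, Continuous (app φ))
    (hW : ∀ K : Set J, AlmostClosed K → ∀ t : WithTop ↥K → E, Continuous t →
      ∀ U : Set Z, IsOpen U → IsOpen {φ | ∀ z, app φ (t z) ∈ U})
    {P : Set J} (hP : AlmostClosed P) {c : WithTop ↥P → Φ} (hc : Continuous c)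
    {e : WithTop ↥P → E} (he : Continuous e) : Continuous fun p => app (c p) (e p) := by
  refine continuous_iff_continuousAt.2 fun p₀ => ?_
  rcases isOpen_singleton_or_isSuccLimit p₀ with hiso | hp₀
  · rw [ContinuousAt, (isOpen_singleton_iff_nhds_eq_pure p₀).1 hiso]
    exact tendsto_pure_nhds _ p₀
  refine fun s hs => Filter.mem_map.2 ?_
  obtain ⟨U, hUs, hU, hpU⟩ := mem_nhds_iff.1 hs
  -- On a tail `(x₀, p₀]`, `e` is a transfinite sequence `t` with `app (c p₀) ∘ t` inside `U`,
  -- and `c p` stays in the open set `W(t, U)` for `p` close to `p₀`.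
  have hbelow : ∃ b, b < p₀ := not_isMin_iff.1 hp₀.not_isMin
  obtain ⟨x₀, hx₀, hx₀U⟩ := exists_Ioc_subset_of_mem_nhds
    (((happ (c p₀)).comp he).continuousAt.preimage_mem_nhds (hU.mem_nhds hpU)) hbelow
  obtain ⟨K, hKP, hK, hrange⟩ := hP.exists_range_withTopInclusion_eq_Ioc hp₀ hx₀
  have hcW : c p₀ ∈ {φ | ∀ z, app φ (e (withTopInclusion hKP z)) ∈ U} :=
    fun z => hx₀U (hrange ▸ mem_range_self z)
  have hWopen := hW K hK _ (he.comp (continuous_withTopInclusion hKP hK)) U hU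
  obtain ⟨x₁, hx₁, hx₁W⟩ := exists_Ioc_subset_of_mem_nhds
    (hc.continuousAt.preimage_mem_nhds (hWopen.mem_nhds hcW)) hbelow
  refine Filter.mem_of_superset ((isOpen_Ioc_of_wellFoundedLT (max x₀ x₁) p₀).mem_nhds
    (right_mem_Ioc.2 (max_lt hx₀ hx₁))) fun z hz => hUs ?_
  obtain ⟨k, hk⟩ : z ∈ range (withTopInclusion hKP) :=
    hrange ▸ ⟨(le_max_left _ _).trans_lt hz.1, hz.2⟩
  have hzW : app (c z) (e (withTopInclusion hKP k)) ∈ U :=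
    hx₁W ⟨(le_max_right _ _).trans_lt hz.1, hz.2⟩ k
  rwa [hk] at hzW

end Evaluation

section FunctionSpace

variable {J : Type*} [LinearOrder J]

theorem isOpen_mjTop_setOf_forall_mem {E Z : Type*} (tE : TopologicalSpace E)
    (tZ : TopologicalSpace Z) {K : Set J} (hK : AlmostClosed K) {t : WithTop ↥K → E}
    (ht : Continuous[_, tE] t) {U : Set Z} (hU : IsOpen[tZ] U) :
    IsOpen[mjTop J tE tZ] {f : Cts E Z tE tZ | ∀ z, f.1 (t z) ∈ U} :=
  isOpen_generateFrom_of_mem ⟨K, hK, t, ht, U, hU, rfl⟩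

variable [WellFoundedLT J]

theorem continuous_apply_of_path {E Z : Type*} {tE : TopologicalSpace E}
    {tZ : TopologicalSpace Z} {P : Set J} (hP : AlmostClosed P)
    {c : WithTop ↥P → Cts E Z tE tZ} (hc : Continuous[_, mjTop J tE tZ] c)
    {e : WithTop ↥P → E} (he : Continuous[_, tE] e) : Continuous[_, tZ] fun p => (c p).1 (e p) :=
  continuous_eval_of_path (fun f x => f.1 x) (fun f => f.2)
    (fun _ hK _ ht _ hU => isOpen_mjTop_setOf_forall_mem tE tZ hK ht hU) hP hc he

variable {X Y Z : Type*} [tX : TopologicalSpace X] [tY : TopologicalSpace Y]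
  [tZ : TopologicalSpace Z]

theorem continuous_slice_of_jTop (hY : IsJConvergence J Y) {f : X × Y → Z}
    (hf : Continuous[jTop J (X × Y), tZ] f) (x : X) : Continuous fun y => f (x, y) := by
  have h := continuous_jTop_of_continuous (J := J) (Continuous.prodMk_right (Y := Y) x)
  rw [jTop_eq_self hY] at h
  exact @Continuous.comp _ _ _ _ (jTop J (X × Y)) _ _ _ hf h

def curryCts (hY : IsJConvergence J Y) (f : Cts (X × Y) Z (jTop J (X × Y)) tZ)
    (x : X) : Cts Y Z tY tZ :=
  ⟨fun y => f.1 (x, y), continuous_slice_of_jTop hY f.2 x⟩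

theorem continuous_curryCts (hX : IsJConvergence J X) (hY : IsJConvergence J Y)
    (f : Cts (X × Y) Z (jTop J (X × Y)) tZ) :
    Continuous[tX, @jTop J _ _ (mjTop J tY tZ)] (curryCts hY f) := by
  have h : Continuous[tX, mjTop J tY tZ] (curryCts hY f) := by
    refine continuous_generateFrom_iff.2 ?_
    rintro _ ⟨K, -, t, ht, U, hU, rfl⟩
    refine isClosed_compl_iff.1 (isJConvergence_iff.1 hX _ ?_)
    refine jClosedSet_compl_setOf_forall_mem (fun x z => f.1 (x, t z))
      (fun N hN a ha b hb => ?_) hU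
    exact @Continuous.comp _ _ _ _ (jTop J (X × Y)) _ _ _ f.2
      (hN.continuous_jTop (ha.prodMk (ht.comp hb)))
  have h' := continuous_jTop_of_continuous (J := J) h
  rwa [jTop_eq_self hX] at h'

theorem continuous_uncurry_of_jTop (g : Cts X (Cts Y Z tY tZ) tX (@jTop J _ _ (mjTop J tY tZ))) :
    Continuous[jTop J (X × Y), tZ] fun q : X × Y => (g.1 q.1).1 q.2 := by
  refine continuous_def.2 fun U hU => isOpen_jTop_of_jOpenSet fun P hP p hp hpU => ?_
  refine hP.apply_top_mem_of_isClosed (g := fun n => (g.1 (p n).1).1 (p n).2) ?_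
    hU.isClosed_compl hpU
  have hc := @Continuous.comp _ _ _ _ tX (@jTop J _ _ (mjTop J tY tZ)) _ _ g.2
    (continuous_fst.comp hp)
  exact continuous_apply_of_path hP (continuous_le_rng jTop_le hc) (continuous_snd.comp hp)

def curryEquiv (hX : IsJConvergence J X) (hY : IsJConvergence J Y) :
    Cts (X × Y) Z (jTop J (X × Y)) tZ ≃ Cts X (Cts Y Z tY tZ) tX (@jTop J _ _ (mjTop J tY tZ)) where
  toFun f := ⟨curryCts hY f, continuous_curryCts hX hY f⟩
  invFun g := ⟨fun q => (g.1 q.1).1 q.2, continuous_uncurry_of_jTop g⟩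
  left_inv _ := rfl
  right_inv _ := rfl

theorem continuous_curryEquiv (hX : IsJConvergence J X) (hY : IsJConvergence J Y) :
    Continuous[@jTop J _ _ (mjTop J (jTop J (X × Y)) tZ),
      mjTop J tX (@jTop J _ _ (mjTop J tY tZ))] (curryEquiv hX hY) := by
  refine continuous_generateFrom_iff.2 ?_
  rintro _ ⟨K, -, s, hs, 𝒰, h𝒰, rfl⟩
  refine isOpen_jTop_of_jOpenSet (jClosedSet_compl_setOf_forall_mem
    (fun f z => curryCts hY f (s z)) (fun N hN a ha b hb => ?_) h𝒰)
  refine hN.continuous_jTop (continuous_generateFrom_iff.2 ?_)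
  rintro _ ⟨K', -, t, ht, U, hU, rfl⟩
  refine isClosed_compl_iff.1 (hN.isClosed_of_jClosedSet ?_)
  refine jClosedSet_compl_setOf_forall_mem (fun n z => (a n).1 (s (b n), t z))
    (fun N' hN' a' ha' b' hb' => ?_) hU
  exact continuous_apply_of_path hN'
    (@Continuous.comp _ _ _ _ _ (mjTop J (jTop J (X × Y)) tZ) _ _ ha ha')
    (hN'.continuous_jTop ((hs.comp (hb.comp ha')).prodMk (ht.comp hb')))

theorem continuous_curryEquiv_symm (hX : IsJConvergence J X) (hY : IsJConvergence J Y) :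
    Continuous[@jTop J _ _ (mjTop J tX (@jTop J _ _ (mjTop J tY tZ))),
      mjTop J (jTop J (X × Y)) tZ] (curryEquiv (tZ := tZ) hX hY).symm := by
  refine continuous_generateFrom_iff.2 ?_
  rintro _ ⟨K, -, r, hr, U, hU, rfl⟩
  refine isOpen_jTop_of_jOpenSet (jClosedSet_compl_setOf_forall_mem
    (fun g z => ((curryEquiv hX hY).symm g).1 (r z)) (fun N hN a ha b hb => ?_) hU)
  have hr' := (continuous_le_rng jTop_le hr).comp hb
  have hχ := continuous_apply_of_path hN ha (continuous_fst.comp hr')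
  exact continuous_apply_of_path hN (continuous_le_rng jTop_le hχ) (continuous_snd.comp hr')

end FunctionSpace

noncomputable def curryHomeomorph {J : Type*} [LinearOrder J] [WellFoundedLT J] {X Y Z : Type*}
    [tX : TopologicalSpace X] [tY : TopologicalSpace Y] [tZ : TopologicalSpace Z]
    (hX : IsJConvergence J X) (hY : IsJConvergence J Y) :
    @Homeomorph (Cts (X × Y) Z (jTop J (X × Y)) tZ)
      (Cts X (Cts Y Z tY tZ) tX (@jTop J _ _ (mjTop J tY tZ)))
      (@jTop J _ _ (mjTop J (jTop J (X × Y)) tZ))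
      (@jTop J _ _ (mjTop J tX (@jTop J _ _ (mjTop J tY tZ)))) := by
  letI := @jTop J _ _ (mjTop J (jTop J (X × Y)) tZ)
  letI := @jTop J _ _ (mjTop J tX (@jTop J _ _ (mjTop J tY tZ)))
  refine ⟨curryEquiv hX hY, ?_, ?_⟩
  · have h := continuous_jTop_of_continuous (J := J) (continuous_curryEquiv (tZ := tZ) hX hY)
    rwa [jTop_jTop] at h
  · have h := continuous_jTop_of_continuous (J := J) (continuous_curryEquiv_symm (tZ := tZ) hX hY)
    rwa [jTop_jTop] at h

theorem stmt8_general {J : Type v} [LinearOrder J] [WellFoundedLT J] {X : Type u} {Y : Type w} {Z : Type w}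
    [tX : TopologicalSpace X] [tY : TopologicalSpace Y] [tZ : TopologicalSpace Z]
    (hX : IsJConvergence J X) (hY : IsJConvergence J Y) :
    letI tA : TopologicalSpace (Cts (X × Y) Z (jTop J (X × Y)) tZ) :=
      @jTop J _ _ (mjTop J (jTop J (X × Y)) tZ)
    letI tB : TopologicalSpace
        (Cts X (Cts Y Z tY tZ) tX (@jTop J _ _ (mjTop J tY tZ))) :=
      @jTop J _ _ (mjTop J tX (@jTop J _ _ (mjTop J tY tZ)))
    ∃ H : Homeomorph (Cts (X × Y) Z (jTop J (X × Y)) tZ)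
        (Cts X (Cts Y Z tY tZ) tX (@jTop J _ _ (mjTop J tY tZ))),
      ∀ (f : Cts (X × Y) Z (jTop J (X × Y)) tZ) (x : X) (y : Y),
        ((H.toEquiv f).1 x).1 y = f.1 (x, y) :=
  ⟨curryHomeomorph hX hY, fun _ _ _ => rfl⟩

theorem stmt8 {J : Type v} [LinearOrder J] [WellFoundedLT J] [TopologicalSpace J]
    [OrderTopology J] [NoncompactSpace J] {X : Type u} {Y : Type w} {Z : Type w}
    [tX : TopologicalSpace X] [tY : TopologicalSpace Y] [tZ : TopologicalSpace Z]
    (hX : IsJConvergence J X) (hY : IsJConvergence J Y) (hZ : IsJConvergence J Z) :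
    letI tA : TopologicalSpace (Cts (X × Y) Z (jTop J (X × Y)) tZ) :=
      @jTop J _ _ (mjTop J (jTop J (X × Y)) tZ)
    letI tB : TopologicalSpace
        (Cts X (Cts Y Z tY tZ) tX (@jTop J _ _ (mjTop J tY tZ))) :=
      @jTop J _ _ (mjTop J tX (@jTop J _ _ (mjTop J tY tZ)))
    ∃ H : Homeomorph (Cts (X × Y) Z (jTop J (X × Y)) tZ)
        (Cts X (Cts Y Z tY tZ) tX (@jTop J _ _ (mjTop J tY tZ))),
      ∀ (f : Cts (X × Y) Z (jTop J (X × Y)) tZ) (x : X) (y : Y),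
        ((H.toEquiv f).1 x).1 y = f.1 (x, y) :=
  stmt8_general (tX := tX) (tY := tY) (tZ := tZ) hX hY
end
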